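/- arXiv:0705.3632 — 3 statements merged into one kernel-verified Lean document; each statement's English description precedes it below -/
import Mathlib

section
/- The quadratic form σ on F̄₂[[X]] commutes with the Frobenius map: σ(A²) = σ(A)² for every A ∈ F̄₂[[X]]. -/
open PowerSeries
open scoped Classical

/-- The quadratic form
`σ(Σ αₙXⁿ) = α₀² + Σ_{n≥0} α_{2ⁿ}² X^{2^{n+1}} + Σ_{0≤i<j} C(i+j,i) αᵢαⱼ X^{i+j}`. -/
noncomputable def sigmaForm {K : Type*} [Field K] (A : PowerSeries K) : PowerSeries K :=
  PowerSeries.mk fun m =>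
    (if m = 0 then (PowerSeries.coeff 0 A) ^ 2 else 0) +
    (if ∃ n : ℕ, m = 2 ^ (n + 1) then (PowerSeries.coeff (m / 2) A) ^ 2 else 0) +
    ∑ p ∈ Finset.HasAntidiagonal.antidiagonal m,
      (if p.1 < p.2 then
        (m.choose p.1 : K) * PowerSeries.coeff p.1 A * PowerSeries.coeff p.2 A
      else 0)

local notation "K" => AlgebraicClosure (ZMod 2)

private lemma cast_choose_sq (k a : ℕ) : ((k.choose a : K)) ^ 2 = (k.choose a : K) := by
  rw [← map_natCast (algebraMap (ZMod 2) K) (k.choose a), ← map_pow, ZMod.pow_card]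

private lemma cast_choose_double (k a : ℕ) :
    (((2 * k).choose (2 * a) : K)) = (k.choose a : K) := by
  have h : ((2 * k).choose (2 * a) : ZMod 2) = (k.choose a : ZMod 2) := by
    have := @Choose.choose_modEq_choose_mod_mul_choose_div_nat (2 * k) (2 * a) 2 ⟨Nat.prime_two⟩
    simp at this
    rw [ZMod.natCast_eq_natCast_iff]
    simpa using this
  rw [← map_natCast (algebraMap (ZMod 2) K) ((2*k).choose (2*a)),
    ← map_natCast (algebraMap (ZMod 2) K) (k.choose a), h]

private lemma coeff_sq (A : PowerSeries K) (m : ℕ) :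
    PowerSeries.coeff m (A ^ 2) =
      if Even m then (PowerSeries.coeff (m / 2) A) ^ 2 else 0 := by
  rw [sq, PowerSeries.coeff_mul]
  by_cases hm : Even m
  · obtain ⟨k, rfl⟩ := hm
    have hd : ((k, k) : ℕ × ℕ) ∈ Finset.HasAntidiagonal.antidiagonal (k + k) := by simp
    rw [← Finset.add_sum_erase _ _ hd, if_pos ⟨k, rfl⟩]
    have hz : ∑ p ∈ (Finset.HasAntidiagonal.antidiagonal (k + k)).erase (k, k),
        PowerSeries.coeff p.1 A * PowerSeries.coeff p.2 A = 0 := by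
      refine Finset.sum_involution (fun p _ => p.swap) ?_ ?_ ?_ ?_
      · intro p _
        rw [Prod.fst_swap, Prod.snd_swap, mul_comm]
        exact CharTwo.add_self_eq_zero _
      · intro p hp _
        rw [Finset.mem_erase, Finset.HasAntidiagonal.mem_antidiagonal] at hp
        intro h
        have h1 : p.2 = p.1 := congrArg Prod.fst h
        exact hp.1 (by
          have : p.1 = k := by omega
          have : p.2 = k := by omega
          exact Prod.ext (by omega) (by omega))
      · intro p hp
        rw [Finset.mem_erase, Finset.HasAntidiagonal.mem_antidiagonal] at hp
        rw [Finset.mem_erase, Finset.HasAntidiagonal.mem_antidiagonal]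
        constructor
        · intro h
          exact hp.1 (by
            have h1 : p.1 = k := congrArg Prod.snd h
            have h2 : p.2 = k := congrArg Prod.fst h
            exact Prod.ext h1 h2)
        · simpa [add_comm] using hp.2
      · intro p _
        exact Prod.swap_swap p
    rw [hz, add_zero]
    have : (k + k) / 2 = k := by omega
    rw [this, sq]
  · rw [if_neg hm]
    refine Finset.sum_involution (fun p _ => p.swap) ?_ ?_ ?_ ?_
    · intro p _
      rw [Prod.fst_swap, Prod.snd_swap, mul_comm]
      exact CharTwo.add_self_eq_zero _
    · intro p hp _
      rw [Finset.HasAntidiagonal.mem_antidiagonal] at hp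
      intro h
      have h1 : p.2 = p.1 := congrArg Prod.fst h
      exact hm ⟨p.1, by omega⟩
    · intro p hp
      rw [Finset.HasAntidiagonal.mem_antidiagonal] at hp ⊢
      simpa [add_comm] using hp
    · intro p _
      exact Prod.swap_swap p

private lemma term_eq (A : PowerSeries K) (k a b : ℕ) (hab : a + b = k) :
    ((k + k).choose (2 * a) : K) * PowerSeries.coeff (2 * a) (A ^ 2) *
      PowerSeries.coeff (2 * b) (A ^ 2) =
    ((k.choose a : K) * PowerSeries.coeff a A * PowerSeries.coeff b A) ^ 2 := by
  have hkk : k + k = 2 * k := by ring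
  rw [hkk, cast_choose_double, coeff_sq, coeff_sq, if_pos ⟨a, by ring⟩, if_pos ⟨b, by ring⟩]
  have ha : 2 * a / 2 = a := by omega
  have hb : 2 * b / 2 = b := by omega
  rw [ha, hb, mul_pow, mul_pow, cast_choose_sq]

/-- The quadratic form `σ` on `𝔽̄₂[[X]]` commutes with the Frobenius map `A ↦ A²`. -/
theorem sigmaForm_frobenius (A : PowerSeries (AlgebraicClosure (ZMod 2))) :
    sigmaForm (A ^ 2) = (sigmaForm A) ^ 2 := by
  ext m
  rw [coeff_sq (sigmaForm A) m]
  by_cases hm : Even m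
  · obtain ⟨k, rfl⟩ := hm
    rw [if_pos ⟨k, rfl⟩]
    have hdiv : (k + k) / 2 = k := by omega
    rw [hdiv]
    simp only [sigmaForm, PowerSeries.coeff_mk]
    rw [CharTwo.add_sq, CharTwo.add_sq]
    have e0 : (if k + k = 0 then (PowerSeries.coeff 0 (A ^ 2)) ^ 2 else 0) =
        (if k = 0 then (PowerSeries.coeff 0 A) ^ 2 else 0) ^ 2 := by
      rcases eq_or_ne k 0 with rfl | h
      · rw [if_pos rfl, if_pos rfl, coeff_sq, if_pos (Even.zero), Nat.zero_div]
      · rw [if_neg (by omega), if_neg h, zero_pow two_ne_zero]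
    have e1 : (if ∃ n : ℕ, k + k = 2 ^ (n + 1) then
          (PowerSeries.coeff ((k + k) / 2) (A ^ 2)) ^ 2 else 0) =
        (if ∃ n : ℕ, k = 2 ^ (n + 1) then (PowerSeries.coeff (k / 2) A) ^ 2 else 0) ^ 2 := by
      rw [hdiv]
      by_cases h : ∃ n : ℕ, k = 2 ^ (n + 1)
      · obtain ⟨n, rfl⟩ := h
        rw [if_pos ⟨n + 1, by rw [pow_succ]; ring⟩, if_pos ⟨n, rfl⟩]
        have hev : Even (2 ^ (n + 1)) := ⟨2 ^ n, by rw [pow_succ]; omega⟩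
        rw [coeff_sq, if_pos hev]
      · rcases eq_or_ne k 1 with rfl | h1
        · rw [if_pos ⟨0, rfl⟩, if_neg h, coeff_sq, if_neg (by decide)]
        · rw [if_neg, if_neg h, zero_pow two_ne_zero]
          rintro ⟨n, hn⟩
          rcases n with _ | n
          · exact h1 (by omega)
          · exact h ⟨n, by rw [pow_succ] at hn ⊢; omega⟩
    have e2 : (∑ p ∈ Finset.HasAntidiagonal.antidiagonal (k + k),
          if p.1 < p.2 then ((k + k).choose p.1 : K) * PowerSeries.coeff p.1 (A ^ 2) *
            PowerSeries.coeff p.2 (A ^ 2) else 0) =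
        (∑ q ∈ Finset.HasAntidiagonal.antidiagonal k,
          if q.1 < q.2 then (k.choose q.1 : K) * PowerSeries.coeff q.1 A *
            PowerSeries.coeff q.2 A else 0) ^ 2 := by
      rw [sum_pow_char 2]
      refine Finset.sum_bij_ne_zero (fun p _ _ => (p.1 / 2, p.2 / 2)) ?_ ?_ ?_ ?_
      · -- maps into antidiagonal k
        intro p hp hne
        rw [Finset.HasAntidiagonal.mem_antidiagonal] at hp
        by_cases hlt : p.1 < p.2
        · rw [if_pos hlt] at hne
          have h1 : Even p.1 := by
            by_contra he
            rw [coeff_sq A p.1, if_neg he] at hne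
            simp at hne
          have h2 : Even p.2 := by
            by_contra he
            rw [coeff_sq A p.2, if_neg he] at hne
            simp at hne
          obtain ⟨x, hx⟩ := h1
          obtain ⟨y, hy⟩ := h2
          simp only [Finset.HasAntidiagonal.mem_antidiagonal]
          omega
        · rw [if_neg hlt] at hne
          exact absurd rfl hne
      · -- injective on support
        intro p hp1 hp2 q hq1 hq2 heq
        by_cases hlt : p.1 < p.2
        swap
        · rw [if_neg hlt] at hp2; exact absurd rfl hp2
        by_cases hlt' : q.1 < q.2
        swap
        · rw [if_neg hlt'] at hq2; exact absurd rfl hq2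
        rw [if_pos hlt] at hp2
        rw [if_pos hlt'] at hq2
        have hp1e : Even p.1 := by
          by_contra he; rw [coeff_sq A p.1, if_neg he] at hp2; simp at hp2
        have hp2e : Even p.2 := by
          by_contra he; rw [coeff_sq A p.2, if_neg he] at hp2; simp at hp2
        have hq1e : Even q.1 := by
          by_contra he; rw [coeff_sq A q.1, if_neg he] at hq2; simp at hq2
        have hq2e : Even q.2 := by
          by_contra he; rw [coeff_sq A q.2, if_neg he] at hq2; simp at hq2
        obtain ⟨x1, hx1⟩ := hp1e
        obtain ⟨x2, hx2⟩ := hp2e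
        obtain ⟨y1, hy1⟩ := hq1e
        obtain ⟨y2, hy2⟩ := hq2e
        simp only [Prod.mk.injEq] at heq
        exact Prod.ext (by omega) (by omega)
      · -- surjective onto support
        intro q hq hne
        rw [Finset.HasAntidiagonal.mem_antidiagonal] at hq
        by_cases hlt : q.1 < q.2
        swap
        · rw [if_neg hlt] at hne; simp at hne
        rw [if_pos hlt] at hne
        refine ⟨(2 * q.1, 2 * q.2), ?_, ?_, ?_⟩
        · rw [Finset.HasAntidiagonal.mem_antidiagonal]; omega
        · rw [if_pos (by omega : 2 * q.1 < 2 * q.2)]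
          have := term_eq A k q.1 q.2 hq
          simp only at this ⊢
          rw [this]
          exact hne
        · have h1 : 2 * q.1 / 2 = q.1 := by omega
          have h2 : 2 * q.2 / 2 = q.2 := by omega
          simp only [h1, h2]
      · -- values agree
        intro p hp hne
        rw [Finset.HasAntidiagonal.mem_antidiagonal] at hp
        by_cases hlt : p.1 < p.2
        swap
        · rw [if_neg hlt] at hne; exact absurd rfl hne
        rw [if_pos hlt] at hne
        have hp1e : Even p.1 := by
          by_contra he; rw [coeff_sq A p.1, if_neg he] at hne; simp at hne
        have hp2e : Even p.2 := by
          by_contra he; rw [coeff_sq A p.2, if_neg he] at hne; simp at hne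
        obtain ⟨x, hx⟩ := hp1e
        obtain ⟨y, hy⟩ := hp2e
        have hx' : p.1 = 2 * (p.1 / 2) := by omega
        have hy' : p.2 = 2 * (p.2 / 2) := by omega
        beta_reduce
        rw [if_pos hlt, if_pos (by omega : p.1 / 2 < p.2 / 2)]
        have hk : p.1 / 2 + p.2 / 2 = k := by omega
        have := term_eq A k (p.1 / 2) (p.2 / 2) hk
        simp only at this ⊢
        rw [← hx', ← hy'] at this
        exact this
    rw [e0, e1, e2]
  · rw [if_neg hm]
    simp only [sigmaForm, PowerSeries.coeff_mk]
    rw [if_neg (by rintro rfl; exact hm Even.zero),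
      if_neg (by rintro ⟨n, rfl⟩; exact hm ⟨2 ^ n, by rw [pow_succ]; ring⟩),
      Finset.sum_eq_zero, add_zero, add_zero]
    intro p hp
    rw [Finset.HasAntidiagonal.mem_antidiagonal] at hp
    by_cases hlt : p.1 < p.2
    swap
    · rw [if_neg hlt]
    rw [if_pos hlt]
    rcases Nat.even_or_odd p.1 with h1 | h1
    · have h2 : ¬ Even p.2 := by
        intro h
        exact hm (hp ▸ h1.add h)
      rw [coeff_sq A p.2, if_neg h2, mul_zero]
    · have h2 : ¬ Even p.1 := Nat.not_even_iff_odd.mpr h1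
      rw [coeff_sq A p.1, if_neg h2, mul_zero, zero_mul]
end

section
/- If A ∈ 1 + X·F̄₂[[X]] contains a monomial X^{2^k} with nonzero coefficient, then the orbit of A under σ is infinite. -/
open PowerSeries
open scoped Classical

local notation "Kb" => AlgebraicClosure (ZMod 2)

lemma sigma_coeff_zero (A : PowerSeries Kb) :
    PowerSeries.coeff 0 (sigmaForm A) = (PowerSeries.coeff 0 A) ^ 2 := by
  rw [sigmaForm, coeff_mk]
  have h2 : ¬ ∃ n : ℕ, (0:ℕ) = 2 ^ (n+1) := by
    rintro ⟨n, hn⟩; exact (pow_ne_zero (n+1) (two_ne_zero)) hn.symm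
  simp [h2]

lemma sigma_coeff_one (A : PowerSeries Kb) :
    PowerSeries.coeff 1 (sigmaForm A) =
      PowerSeries.coeff 0 A * PowerSeries.coeff 1 A := by
  rw [sigmaForm, coeff_mk]
  have h2 : ¬ ∃ n : ℕ, (1:ℕ) = 2 ^ (n+1) := by
    rintro ⟨n, hn⟩
    have : 1 < 2 ^ (n+1) := Nat.one_lt_two_pow_iff.mpr (Nat.succ_ne_zero n)
    omega
  have hanti : Finset.HasAntidiagonal.antidiagonal (1:ℕ) = {(0,1), (1,0)} := rfl
  rw [if_neg h2, hanti, Finset.sum_pair (by decide)]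
  norm_num [PowerSeries.coeff_zero_eq_constantCoeff]

lemma sigma_coeff_pow (A : PowerSeries Kb) (n : ℕ) :
    PowerSeries.coeff (2 ^ (n+1)) (sigmaForm A) =
      (PowerSeries.coeff (2 ^ n) A) ^ 2 +
      PowerSeries.coeff 0 A * PowerSeries.coeff (2 ^ (n+1)) A := by
  rw [sigmaForm, coeff_mk]
  have hm0 : (2:ℕ) ^ (n+1) ≠ 0 := pow_ne_zero _ two_ne_zero
  have hex : ∃ m : ℕ, (2:ℕ) ^ (n+1) = 2 ^ (m+1) := ⟨n, rfl⟩
  have hdiv : (2:ℕ) ^ (n+1) / 2 = 2 ^ n := by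
    rw [pow_succ]; exact Nat.mul_div_cancel _ two_pos
  have hsum : ∑ p ∈ Finset.HasAntidiagonal.antidiagonal (2 ^ (n+1)),
      (if p.1 < p.2 then
        ((2 ^ (n+1)).choose p.1 : Kb) * PowerSeries.coeff p.1 A * PowerSeries.coeff p.2 A
      else 0) = PowerSeries.coeff 0 A * PowerSeries.coeff (2 ^ (n+1)) A := by
    rw [Finset.sum_eq_single_of_mem (⟨0, 2 ^ (n+1)⟩ : ℕ × ℕ)]
    · have : (0:ℕ) < 2 ^ (n+1) := pow_pos two_pos _
      simp [this]
    · simp [Finset.mem_antidiagonal]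
    · rintro ⟨i, j⟩ hmem hne
      rw [Finset.HasAntidiagonal.mem_antidiagonal] at hmem
      by_cases hij : i < j
      · have hi0 : i ≠ 0 := by
          rintro rfl
          exact hne (by simp_all)
        have him : i ≠ 2 ^ (n+1) := by omega
        have hdvd : (2:ℕ) ∣ (2 ^ (n+1)).choose i :=
          Nat.Prime.dvd_choose_pow Nat.prime_two hi0 him
        have : ((2 ^ (n+1)).choose i : Kb) = 0 :=
          (CharP.cast_eq_zero_iff Kb 2 _).mpr hdvd
        simp [hij, this]
      · simp [hij]
  rw [hsum]
  simp [hm0, hex, hdiv, add_comm]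

noncomputable def invFrobIter (n : ℕ) : Kb → Kb :=
  ((frobeniusEquiv Kb 2).symm : Kb → Kb)^[n]

lemma invFrobIter_add (n : ℕ) (x y : Kb) :
    invFrobIter n (x + y) = invFrobIter n x + invFrobIter n y := by
  induction n generalizing x y with
  | zero => rfl
  | succ n ih =>
      rw [invFrobIter, Function.iterate_succ_apply, map_add]
      exact ih _ _

lemma invFrobIter_zero (n : ℕ) : invFrobIter n 0 = 0 := by
  induction n with
  | zero => rfl
  | succ n ih => rw [invFrobIter, Function.iterate_succ_apply, map_zero]; exact ih

lemma invFrobIter_sq (n : ℕ) (x : Kb) : invFrobIter (n+1) (x ^ 2) = invFrobIter n x := by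
  rw [invFrobIter, Function.iterate_succ_apply]
  congr 1
  have := frobeniusEquiv_symm_apply_frobenius Kb 2 x
  simpa [frobenius_def] using this

lemma invFrobIter_injective (n : ℕ) : Function.Injective (invFrobIter n) :=
  Function.Injective.iterate (frobeniusEquiv Kb 2).symm.injective n

noncomputable def auxQ (A : PowerSeries Kb) : PowerSeries Kb :=
  PowerSeries.mk fun n => invFrobIter n (PowerSeries.coeff (2 ^ n) A)

lemma auxQ_sigma (A : PowerSeries Kb) (hA : PowerSeries.coeff 0 A = 1) :
    auxQ (sigmaForm A) = (1 + PowerSeries.X) * auxQ A := by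
  ext n
  rw [add_mul, one_mul, map_add]
  cases n with
  | zero =>
      rw [auxQ, coeff_mk]
      simp only [pow_zero]
      rw [sigma_coeff_one A, hA, one_mul]
      have : (PowerSeries.coeff 0) (PowerSeries.X * auxQ A) = 0 := by
        simp
      rw [this, add_zero, auxQ, coeff_mk]
      rfl
  | succ n =>
      simp only [auxQ, coeff_mk]
      rw [sigma_coeff_pow A n, hA, one_mul, invFrobIter_add,
        invFrobIter_sq, PowerSeries.coeff_succ_X_mul, coeff_mk, add_comm]

lemma orbit_props (A : PowerSeries Kb) (hA : PowerSeries.coeff 0 A = 1) (n : ℕ) :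
    PowerSeries.coeff 0 (sigmaForm^[n] A) = 1 ∧
      auxQ (sigmaForm^[n] A) = (1 + PowerSeries.X) ^ n * auxQ A := by
  induction n with
  | zero => simpa [PowerSeries.coeff_zero_eq_constantCoeff] using hA
  | succ n ih =>
      rw [Function.iterate_succ_apply']
      constructor
      · rw [sigma_coeff_zero, ih.1, one_pow]
      · rw [auxQ_sigma _ ih.1, ih.2]; ring

/-- If `A ∈ 1 + X·𝔽̄₂[[X]]` contains a monomial `X^{2^k}` with nonzero coefficient,
then the orbit of `A` under `σ` is infinite. -/
theorem sigmaForm_orbit_infinite (A : PowerSeries (AlgebraicClosure (ZMod 2)))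
    (hA : PowerSeries.coeff 0 A = 1)
    (hk : ∃ k : ℕ, PowerSeries.coeff (2 ^ k) A ≠ 0) :
    (Set.range fun n : ℕ => sigmaForm^[n] A).Infinite := by
  have hQ : auxQ A ≠ 0 := by
    obtain ⟨k, hk⟩ := hk
    intro h
    apply hk
    have : PowerSeries.coeff k (auxQ A) = 0 := by rw [h, map_zero]
    rw [auxQ, coeff_mk] at this
    have := invFrobIter_injective k (this.trans (invFrobIter_zero k).symm)
    exact this
  have hX : (1 + PowerSeries.X : PowerSeries Kb) ≠ 0 := by
    intro h
    have : PowerSeries.constantCoeff (1 + PowerSeries.X : PowerSeries Kb) = 0 := by rw [h, map_zero]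
    simp at this
  have hcoe : ∀ d : ℕ, PowerSeries.coeff d ((1 + PowerSeries.X : PowerSeries Kb) ^ d) = 1 := by
    intro d
    have h1 : (((1 + Polynomial.X : Polynomial Kb) ^ d : Polynomial Kb) : PowerSeries Kb)
        = (1 + PowerSeries.X) ^ d := by push_cast; rfl
    rw [← h1, Polynomial.coeff_coe, Polynomial.coeff_one_add_X_pow, Nat.choose_self,
      Nat.cast_one]
  have key : ∀ i j : ℕ, i ≤ j → sigmaForm^[i] A = sigmaForm^[j] A → i = j := by
    intro i j hij h
    obtain ⟨d, rfl⟩ := Nat.exists_eq_add_of_le hij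
    have h1 := (orbit_props A hA i).2
    have h2 := (orbit_props A hA (i + d)).2
    rw [h, h2, pow_add, mul_assoc] at h1
    have h3 := mul_left_cancel₀ (pow_ne_zero i hX) h1.symm
    have h4 : ((1 + PowerSeries.X : PowerSeries Kb) ^ d) * auxQ A = 1 * auxQ A := by
      rw [one_mul]; exact h3.symm
    have h5 := mul_right_cancel₀ hQ h4
    by_contra hd
    have hd' : d ≠ 0 := by omega
    have := congrArg (PowerSeries.coeff d) h5
    rw [hcoe d, PowerSeries.coeff_one, if_neg hd'] at this
    exact one_ne_zero this
  have hinj : Function.Injective fun n : ℕ => sigmaForm^[n] A := by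
    intro i j h
    rcases le_total i j with hle | hle
    · exact key i j hle h
    · exact (key j i hle h.symm).symm
  exact Set.infinite_range_of_injective hinj
end

section
/- A polynomial A ∈ 1 + X·F̄₂[X] that involves no monomial of the form X^{2^k} has a finite orbit under σ. -/
open PowerSeries
open scoped Classical

set_option maxHeartbeats 1000000 in
set_option synthInstance.maxHeartbeats 400000 in
/-- Abbreviation for the algebraic closure of `𝔽₂`. -/
abbrev Fbar2 : Type := AlgebraicClosure (ZMod 2)

/-- Kummer for p = 2: a carry forces evenness of the binomial coefficient. -/
lemma even_choose_of_carry : ∀ N i j : ℕ, i < 2 ^ N → j < 2 ^ N → 2 ^ N ≤ i + j →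
    2 ∣ (i + j).choose i := by
  intro N
  induction N with
  | zero => intro i j hi hj h; omega
  | succ N ih =>
    intro i j hi hj h
    have hpow : (2:ℕ) ^ (N + 1) = 2 * 2 ^ N := by rw [pow_succ]; ring
    have hmod := Choose.choose_modEq_choose_mod_mul_choose_div_nat
      (p := 2) (n := i + j) (k := i)
    unfold Nat.ModEq at hmod
    obtain hi2 | hi2 := Nat.mod_two_eq_zero_or_one i
    all_goals obtain hj2 | hj2 := Nat.mod_two_eq_zero_or_one j
    · have h1 : (i + j) % 2 = 0 := by omega
      have h3 : (i + j) / 2 = i / 2 + j / 2 := by omega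
      have hIH := ih (i / 2) (j / 2) (by omega) (by omega) (by omega)
      rw [h1, hi2, Nat.choose_zero_right, one_mul, h3] at hmod
      omega
    · have h1 : (i + j) % 2 = 1 := by omega
      have h3 : (i + j) / 2 = i / 2 + j / 2 := by omega
      have hIH := ih (i / 2) (j / 2) (by omega) (by omega) (by omega)
      rw [h1, hi2, Nat.choose_zero_right, one_mul, h3] at hmod
      omega
    · have h1 : (i + j) % 2 = 1 := by omega
      have h3 : (i + j) / 2 = i / 2 + j / 2 := by omega
      have hIH := ih (i / 2) (j / 2) (by omega) (by omega) (by omega)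
      rw [h1, hi2, Nat.choose_self, one_mul, h3] at hmod
      omega
    · have h1 : (i + j) % 2 = 0 := by omega
      rw [h1, hi2] at hmod
      simp only [Nat.choose, zero_mul] at hmod
      omega

set_option maxHeartbeats 1000000 in
set_option synthInstance.maxHeartbeats 400000 in
lemma sigmaForm_orbit_finite_aux (A : PowerSeries Fbar2)
    (hA : PowerSeries.coeff 0 A = 1)
    (hpoly : {n : ℕ | PowerSeries.coeff n A ≠ 0}.Finite)
    (hno : ∀ k : ℕ, PowerSeries.coeff (2 ^ k) A = 0) :
    (Set.range fun n : ℕ => sigmaForm^[n] A).Finite := by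
  -- characteristic 2
  have h2 : (2 : Fbar2) = 0 := CharP.cast_eq_zero Fbar2 2
  have hcast : ∀ c : ℕ, 2 ∣ c → (c : Fbar2) = 0 := by
    rintro _ ⟨d, rfl⟩
    push_cast
    rw [h2, zero_mul]
  -- degree bound
  set N : ℕ := hpoly.toFinset.sup id + 1 with hN
  have hdegA : ∀ n, 2 ^ N ≤ n → PowerSeries.coeff n A = 0 := by
    intro n hn
    by_contra hc
    have hmem : n ∈ hpoly.toFinset := hpoly.mem_toFinset.2 hc
    have h1 : n ≤ hpoly.toFinset.sup id := Finset.le_sup (f := id) hmem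
    have h2' : hpoly.toFinset.sup id < 2 ^ N := Nat.lt_two_pow_self.trans_le
      (Nat.pow_le_pow_right (by norm_num) (by omega))
    omega
  -- the finite subalgebra containing all coefficients
  set s : Finset Fbar2 := hpoly.toFinset.image (fun n => PowerSeries.coeff n A) with hs
  set F : Subalgebra (ZMod 2) Fbar2 := Algebra.adjoin (ZMod 2) (s : Set Fbar2) with hF
  have hint : ∀ x : Fbar2, IsIntegral (ZMod 2) x := fun x =>
    (Algebra.IsAlgebraic.isAlgebraic x).isIntegral
  have : IsNoetherian (ZMod 2) F := isNoetherian_adjoin_finset s fun x _ => hint x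
  have : Module.Finite (ZMod 2) F := Module.IsNoetherian.finite (ZMod 2) F
  have hFfin : Finite F := Module.finite_of_finite (ZMod 2)
  have hcoefA : ∀ n, PowerSeries.coeff n A ∈ F := by
    intro n
    by_cases hc : PowerSeries.coeff n A = 0
    · rw [hc]; exact zero_mem F
    · exact Algebra.subset_adjoin (Finset.mem_coe.2
        (Finset.mem_image.2 ⟨n, hpoly.mem_toFinset.2 hc, rfl⟩))
  -- invariant predicate
  set P : PowerSeries Fbar2 → Prop := fun B =>
    PowerSeries.coeff 0 B = 1 ∧ (∀ k : ℕ, PowerSeries.coeff (2 ^ k) B = 0) ∧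
    (∀ n, PowerSeries.coeff n B ∈ F) ∧ (∀ n, 2 ^ N ≤ n → PowerSeries.coeff n B = 0)
    with hP
  have hPA : P A := ⟨hA, hno, hcoefA, hdegA⟩
  -- coefficient of sigmaForm
  have hcoe : ∀ (B : PowerSeries Fbar2) (m : ℕ), PowerSeries.coeff m (sigmaForm B) =
      (if m = 0 then (PowerSeries.coeff 0 B) ^ 2 else 0) +
      (if ∃ n : ℕ, m = 2 ^ (n + 1) then (PowerSeries.coeff (m / 2) B) ^ 2 else 0) +
      ∑ p ∈ Finset.HasAntidiagonal.antidiagonal m,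
        (if p.1 < p.2 then
          (m.choose p.1 : Fbar2) * PowerSeries.coeff p.1 B * PowerSeries.coeff p.2 B
        else 0) := fun B m => PowerSeries.coeff_mk m _
  -- P is preserved
  have hstep : ∀ B, P B → P (sigmaForm B) := by
    intro B hB
    obtain ⟨hB1, hB2, hB3, hB4⟩ := hB
    -- the middle term always vanishes
    have hmid : ∀ m : ℕ,
        (if ∃ n : ℕ, m = 2 ^ (n + 1) then (PowerSeries.coeff (m / 2) B) ^ 2 else 0) = 0 := by
      intro m
      split_ifs with h
      · obtain ⟨n, rfl⟩ := h
        have hdiv : 2 ^ (n + 1) / 2 = 2 ^ n := by simp [pow_succ]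
        rw [hdiv, hB2 n]
        ring
      · rfl
    refine ⟨?_, ?_, ?_, ?_⟩
    · rw [hcoe, hmid]
      simp [hB1]
    · intro k
      rw [hcoe, hmid]
      have hk0 : (2:ℕ) ^ k ≠ 0 := by positivity
      rw [if_neg hk0, zero_add, zero_add]
      apply Finset.sum_eq_zero
      rintro ⟨i, j⟩ hij
      rw [Finset.HasAntidiagonal.mem_antidiagonal] at hij
      split_ifs with hlt
      · rcases Nat.eq_zero_or_pos i with rfl | hi
        · simp only [zero_add] at hij
          rw [hij, hB2 k, mul_zero]
        · have hj : j < 2 ^ k := by omega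
          have hi' : i < 2 ^ k := by omega
          have he : ((2:ℕ) ^ k).choose i = (i + j).choose i := by rw [hij]
          rw [he, hcast _ (even_choose_of_carry k i j hi' hj (by omega)),
            zero_mul, zero_mul]
      · rfl
    · intro m
      rw [hcoe]
      refine add_mem (add_mem ?_ ?_) ?_
      · split_ifs
        · exact pow_mem (hB3 0) 2
        · exact zero_mem F
      · split_ifs
        · exact pow_mem (hB3 _) 2
        · exact zero_mem F
      · refine Subalgebra.sum_mem F fun p _ => ?_
        split_ifs
        · exact mul_mem (mul_mem (Subalgebra.natCast_mem F _) (hB3 _)) (hB3 _)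
        · exact zero_mem F
    · intro m hm
      rw [hcoe, hmid]
      have hm0 : m ≠ 0 := by
        have : 0 < 2 ^ N := Nat.pow_pos (by norm_num)
        omega
      rw [if_neg hm0, zero_add, zero_add]
      apply Finset.sum_eq_zero
      rintro ⟨i, j⟩ hij
      rw [Finset.HasAntidiagonal.mem_antidiagonal] at hij
      split_ifs with hlt
      · by_cases hci : PowerSeries.coeff i B = 0
        · rw [hci]; ring
        by_cases hcj : PowerSeries.coeff j B = 0
        · rw [hcj]; ring
        have hi : i < 2 ^ N := by
          by_contra hc; exact hci (hB4 i (by omega))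
        have hj : j < 2 ^ N := by
          by_contra hc; exact hcj (hB4 j (by omega))
        have he : m.choose i = (i + j).choose i := by rw [hij]
        rw [he, hcast _ (even_choose_of_carry N i j hi hj (by omega)),
          zero_mul, zero_mul]
      · rfl
  -- orbit stays in P
  have horb : ∀ n : ℕ, P (sigmaForm^[n] A) := by
    intro n
    induction n with
    | zero => simpa using hPA
    | succ n ih => rw [Function.iterate_succ_apply']; exact hstep _ ih
  -- the set of power series satisfying P is finite
  have hSfin : {B : PowerSeries Fbar2 | P B}.Finite := by
    rw [← Set.finite_coe_iff]
    refine Finite.of_injective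
      (fun B : {B : PowerSeries Fbar2 | P B} =>
        fun i : Fin (2 ^ N) => (⟨PowerSeries.coeff i B.1, B.2.2.2.1 i⟩ : F)) ?_
    rintro ⟨B, hB⟩ ⟨C, hC⟩ hBC
    ext1
    apply PowerSeries.ext
    intro n
    by_cases hn : n < 2 ^ N
    · have := congrFun hBC ⟨n, hn⟩
      simpa [Subtype.ext_iff] using this
    · rw [hB.2.2.2 n (by omega), hC.2.2.2 n (by omega)]
  exact hSfin.subset (by rintro _ ⟨n, rfl⟩; exact horb n)

/-- A polynomial `A ∈ 1 + X·𝔽̄₂[X]` (finitely many nonzero coefficients) involving no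
monomial of the form `X^{2^k}` has a finite orbit under `σ`. -/
theorem sigmaForm_orbit_finite_of_polynomial (A : PowerSeries (AlgebraicClosure (ZMod 2)))
    (hA : PowerSeries.coeff 0 A = 1)
    (hpoly : {n : ℕ | PowerSeries.coeff n A ≠ 0}.Finite)
    (hno : ∀ k : ℕ, PowerSeries.coeff (2 ^ k) A = 0) :
    (Set.range fun n : ℕ => sigmaForm^[n] A).Finite :=
  sigmaForm_orbit_finite_aux A hA hpoly hno
end
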